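/- Let D be the n×n diagonal matrix with diagonal entries alternately +1 and −1, i.e. D = diag(1, −1, 1, …, (−1)^{n−1}). If A is a K-matrix (hence invertible), then D A^{−1} D^{−1} is a K-matrix; if A is an SK-matrix, then D A^{−1} D^{−1} is an SK-matrix. -/

import Mathlib

open Matrix

/-- The minor of the matrix `A` on the row set `α` and the column set `β`
(rows and columns taken in increasing order); junk value `0` if the
cardinalities of `α` and `β` differ. -/
noncomputable def minorOn {n : ℕ} (A : Matrix (Fin n) (Fin n) ℝ)
    (α β : Finset (Fin n)) : ℝ :=
  if h : β.card = α.card then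
    (A.submatrix (⇑(α.orderEmbOfFin rfl)) (⇑(β.orderEmbOfFin h))).det
  else 0

/-- The principal submatrix `A(α)` of `A` on the index set `α`. -/
def psub {n : ℕ} (A : Matrix (Fin n) (Fin n) ℝ) (α : Finset (Fin n)) :
    Matrix (Fin α.card) (Fin α.card) ℝ :=
  A.submatrix (⇑(α.orderEmbOfFin rfl)) (⇑(α.orderEmbOfFin rfl))

/-- `A` is a Kotelyansky (K) matrix: all principal minors are positive and all
almost principal minors are nonnegative. -/
def IsK {n : ℕ} (A : Matrix (Fin n) (Fin n) ℝ) : Prop :=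
  (∀ α : Finset (Fin n), α.Nonempty → 0 < minorOn A α α) ∧
  (∀ (α : Finset (Fin n)) (r s : Fin n), r ∈ α → s ∈ α → r ≠ s →
    0 ≤ minorOn A (α.erase r) (α.erase s))

/-- `A` is a strictly Kotelyansky (SK) matrix: all principal minors and all
almost principal minors are positive. -/
def IsSK {n : ℕ} (A : Matrix (Fin n) (Fin n) ℝ) : Prop :=
  (∀ α : Finset (Fin n), α.Nonempty → 0 < minorOn A α α) ∧
  (∀ (α : Finset (Fin n)) (r s : Fin n), r ∈ α → s ∈ α → r ≠ s →
    0 < minorOn A (α.erase r) (α.erase s))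

/-- The `j`-th compound matrix of `A`: the matrix of all `j×j` minors of `A`,
indexed by the `j`-element subsets of the index set. -/
noncomputable def compound {m : ℕ} (A : Matrix (Fin m) (Fin m) ℝ) (j : ℕ) :
    Matrix {s : Finset (Fin m) // s.card = j} {s : Finset (Fin m) // s.card = j} ℝ :=
  fun s t => minorOn A s.1 t.1

/-- `A` is J-sign-symmetric for the subset `J` of its index set. -/
def IsJS {ι : Type*} (J : Set ι) (A : Matrix ι ι ℝ) : Prop :=
  (∀ i j, ((i ∈ J ∧ j ∈ J) ∨ (i ∉ J ∧ j ∉ J)) → 0 ≤ A i j) ∧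
  (∀ i j, ((i ∈ J ∧ j ∉ J) ∨ (i ∉ J ∧ j ∈ J)) → A i j ≤ 0)

/-- `A` is strictly J-sign-symmetric: J-sign-symmetric with no zero entries. -/
def IsSJS {ι : Type*} (J : Set ι) (A : Matrix ι ι ℝ) : Prop :=
  IsJS J A ∧ ∀ i j, A i j ≠ 0

/-- `A` is strictly totally J-sign-symmetric: every compound matrix `A^(j)`,
`1 ≤ j ≤ n`, is strictly J-sign-symmetric for some subset of its index set. -/
def IsSTJS {n : ℕ} (A : Matrix (Fin n) (Fin n) ℝ) : Prop :=
  ∀ j, 1 ≤ j → j ≤ n →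
    ∃ J : Set {s : Finset (Fin n) // s.card = j}, IsSJS J (compound A j)

/-- `A` is J-sign-symmetric Kotelyansky (JSK). -/
def IsJSK {n : ℕ} (A : Matrix (Fin n) (Fin n) ℝ) : Prop :=
  (∀ α : Finset (Fin n), α.Nonempty → 0 < minorOn A α α) ∧
  ∀ α : Finset (Fin n), 2 ≤ α.card →
    ∃ J : Set {s : Finset (Fin α.card) // s.card = α.card - 1},
      IsJS J (compound (psub A α) (α.card - 1))

/-- `A` is strictly J-sign-symmetric Kotelyansky (SJSK). -/
def IsSJSK {n : ℕ} (A : Matrix (Fin n) (Fin n) ℝ) : Prop :=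
  0 < A.det ∧
  ∀ α : Finset (Fin n), 2 ≤ α.card →
    ∃ J : Set {s : Finset (Fin α.card) // s.card = α.card - 1},
      IsSJS J (compound (psub A α) (α.card - 1))

/-- `l(B)`: the smallest real eigenvalue of `B`, or `∞` (`⊤` in `EReal`) if `B`
has no real eigenvalues. -/
noncomputable def lval {m : ℕ} (B : Matrix (Fin m) (Fin m) ℝ) : EReal :=
  sInf (insert (⊤ : EReal) ((fun t : ℝ => (t : EReal)) '' {t : ℝ | B.charpoly.IsRoot t}))

/-!
Jacobi's complementary minor formula says that for invertible `A` and `|γ| = |δ|`,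
`det A · det A⁻¹[γ, δ] = (-1)^(Σγ + Σδ) · det A[δᶜ, γᶜ]`; the sign is that of the permutation
moving `γ` (resp. `δ`) to the front, whose inversions are the pairs `i < j` with `i ∉ γ`, `j ∈ γ`.
Conjugating by `D = diag((-1)^i)` multiplies the `(γ, δ)` minor by exactly this sign, so every minor
of `D A⁻¹ D` is the complementary minor of `A` divided by `det A > 0`. Complements of principal
index pairs are principal, and the complement of `(β \ {r}, β \ {s})` is the almost principal pair
`(α \ {r}, α \ {s})` with `α = (β \ {r, s})ᶜ`, so the K and SK sign conditions carry over.
-/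

open Finset

namespace Finset

open Equiv

variable {n k l : ℕ} {α : Finset (Fin n)}

lemma card_filter_lt_orderEmbOfFin (hk : #α = k) (i : Fin k) :
    #(α.filter (· < α.orderEmbOfFin hk i)) = i := by
  have : α.filter (· < α.orderEmbOfFin hk i) = (Iio i).map (α.orderEmbOfFin hk).toEmbedding := by
    ext x
    simp only [mem_filter, mem_map, mem_Iio, RelEmbedding.coe_toEmbedding]
    constructor
    · rintro ⟨hx, hlt⟩
      obtain ⟨j, rfl⟩ : x ∈ Set.range (α.orderEmbOfFin hk) := by
        rw [range_orderEmbOfFin]; exact hx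
      exact ⟨j, (α.orderEmbOfFin hk).lt_iff_lt.1 hlt, rfl⟩
    · rintro ⟨j, hj, rfl⟩
      exact ⟨orderEmbOfFin_mem α hk j, (α.orderEmbOfFin hk).lt_iff_lt.2 hj⟩
  rw [this, card_map, Fin.card_Iio]

@[to_additive]
lemma prod_orderEmbOfFin {M : Type*} [CommMonoid M] (hk : #α = k) (f : Fin n → M) :
    ∏ i, f (α.orderEmbOfFin hk i) = ∏ a ∈ α, f a := by
  conv_rhs => rw [← map_orderEmbOfFin_univ α hk]
  rw [prod_map]
  rfl

lemma sum_card_filter_lt (hk : #α = k) :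
    ∑ j ∈ α, #(α.filter (· < j)) = ∑ i ∈ range k, i := by
  rw [← sum_orderEmbOfFin hk, ← Fin.sum_univ_eq_sum_range]
  exact sum_congr rfl fun i _ => card_filter_lt_orderEmbOfFin hk i

noncomputable def frontPerm (α : Finset (Fin n)) (hk : #α = k) (hl : #αᶜ = l) (hn : k + l = n) :
    Perm (Fin n) :=
  (finSumEquivOfFinset hk hl).symm.trans (finSumFinEquiv.trans (finCongr hn))

lemma frontPerm_lt_frontPerm_iff (hk : #α = k) (hl : #αᶜ = l) (hn : k + l = n)
    {x y : Fin n} (hxy : x < y) :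
    frontPerm α hk hl hn x < frontPerm α hk hl hn y ↔ x ∈ α ∨ y ∉ α := by
  obtain ⟨p, rfl⟩ := (finSumEquivOfFinset hk hl).surjective x
  obtain ⟨q, rfl⟩ := (finSumEquivOfFinset hk hl).surjective y
  simp only [frontPerm, trans_apply, symm_apply_apply]
  have hin (i : Fin k) : α.orderEmbOfFin hk i ∈ α := orderEmbOfFin_mem α hk i
  have hout (j : Fin l) : αᶜ.orderEmbOfFin hl j ∉ α := mem_compl.1 (orderEmbOfFin_mem αᶜ hl j)
  rcases p with a | a <;> rcases q with b | b <;>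
    simp only [finSumEquivOfFinset_inl, finSumEquivOfFinset_inr, finSumFinEquiv_apply_left,
      finSumFinEquiv_apply_right, finCongr_apply, OrderEmbedding.lt_iff_lt, Fin.lt_def,
      Fin.val_cast, Fin.val_castAdd, Fin.val_natAdd, hin, hout] at hxy ⊢
  all_goals simp; omega

lemma sign_frontPerm (hk : #α = k) (hl : #αᶜ = l) (hn : k + l = n) :
    Perm.sign (frontPerm α hk hl hn) = (-1) ^ (∑ a ∈ α, (a : ℕ)) * (-1) ^ (∑ i ∈ range k, i) := by
  have hinv (j : Fin n) :
      ∏ i ∈ Iio j, (if frontPerm α hk hl hn i < frontPerm α hk hl hn j then 1 else -1 : ℤˣ) =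
        (-1) ^ (if j ∈ α then #((Iio j).filter (· ∉ α)) else 0) := by
    rw [prod_congr rfl (g := fun i => if i ∈ α ∨ j ∉ α then 1 else -1) fun i hi => by
      simp only [frontPerm_lt_frontPerm_iff hk hl hn (mem_Iio.1 hi)]]
    split_ifs with hj
    · simp [prod_ite, hj]
    · simp [hj]
  have hsplit (j : Fin n) : #((Iio j).filter (· ∉ α)) + #(α.filter (· < j)) = j := by
    rw [← Fin.card_Iio, ← card_filter_add_card_filter_not (s := Iio j) (· ∉ α)]
    congr 2
    ext x; simp [and_comm]
  have hcount : (∑ j ∈ α, #((Iio j).filter (· ∉ α))) + ∑ i ∈ range k, i = ∑ a ∈ α, (a : ℕ) := by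
    rw [← sum_card_filter_lt hk, ← sum_add_distrib]
    exact sum_congr rfl fun j _ => hsplit j
  rw [Perm.sign_eq_prod_prod_Iio, prod_congr rfl fun j _ => hinv j, prod_pow_eq_pow_sum,
    sum_ite, sum_const_zero, add_zero, ← pow_add, ← hcount, add_assoc, ← two_mul, pow_add,
    pow_mul]
  simp

end Finset

theorem Matrix.det_mul_det_toBlocks₁₁_inv {l m R : Type*} [Fintype l] [Fintype m]
    [DecidableEq l] [DecidableEq m] [CommRing R] (M : Matrix (l ⊕ m) (l ⊕ m) R)
    (h : IsUnit M.det) :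
    M.det * M⁻¹.toBlocks₁₁.det = M.toBlocks₂₂.det := by
  have hMM := M.mul_nonsing_inv h
  rw [← fromBlocks_toBlocks M⁻¹] at hMM
  nth_rw 1 [← fromBlocks_toBlocks M] at hMM
  rw [fromBlocks_multiply, ← fromBlocks_one, fromBlocks_inj] at hMM
  obtain ⟨h₁₁, -, h₂₁, -⟩ := hMM
  have key : M * fromBlocks M⁻¹.toBlocks₁₁ 0 M⁻¹.toBlocks₂₁ 1 =
      fromBlocks 1 M.toBlocks₁₂ 0 M.toBlocks₂₂ := by
    nth_rw 1 [← fromBlocks_toBlocks M]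
    rw [fromBlocks_multiply, h₁₁, h₂₁]
    simp
  simpa [det_fromBlocks_zero₁₂, det_fromBlocks_zero₂₁] using congrArg det key

theorem Matrix.det_submatrix_equiv {m n R : Type*} [Fintype m] [Fintype n] [DecidableEq m]
    [DecidableEq n] [CommRing R] (A : Matrix n n R) (e f : m ≃ n) :
    (A.submatrix e f).det = Equiv.Perm.sign (e.trans f.symm) * A.det := by
  have : A.submatrix e f = (A.submatrix f f).submatrix (e.trans f.symm) id := by
    ext i j; simp
  rw [this, det_permute, det_submatrix_equiv_self]

section minorOn

variable {n k : ℕ} (A : Matrix (Fin n) (Fin n) ℝ)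

lemma minorOn_eq_det {s t : Finset (Fin n)} (hs : #s = k) (ht : #t = k) :
    minorOn A s t = (A.submatrix (s.orderEmbOfFin hs) (t.orderEmbOfFin ht)).det := by
  subst hs
  rw [minorOn, dif_pos ht]

lemma minorOn_empty : minorOn A ∅ ∅ = 1 := by
  rw [minorOn_eq_det A rfl rfl]
  exact det_fin_zero

lemma minorOn_univ : minorOn A univ univ = A.det := by
  have hid : ⇑(univ.orderEmbOfFin (card_fin n)) = id :=
    (orderEmbOfFin_unique _ (fun _ => mem_univ _) strictMono_id).symm
  rw [minorOn_eq_det A (card_fin n) (card_fin n), hid, submatrix_id_id]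

variable {A}

lemma minorOn_self_pos (hA : ∀ α : Finset (Fin n), α.Nonempty → 0 < minorOn A α α)
    (α : Finset (Fin n)) : 0 < minorOn A α α := by
  rcases α.eq_empty_or_nonempty with rfl | hα
  · rw [minorOn_empty]; exact one_pos
  · exact hA α hα

lemma det_pos_of_minorOn_self_pos (hA : ∀ α : Finset (Fin n), α.Nonempty → 0 < minorOn A α α) :
    0 < A.det :=
  minorOn_univ A ▸ minorOn_self_pos hA _

variable (A)

lemma minorOn_diagonal_mul_mul_diagonal (d e : Fin n → ℝ) {γ δ : Finset (Fin n)}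
    (h : #δ = #γ) :
    minorOn (diagonal d * A * diagonal e) γ δ =
      (∏ i ∈ γ, d i) * (∏ j ∈ δ, e j) * minorOn A γ δ := by
  rw [minorOn_eq_det _ rfl h, minorOn_eq_det _ rfl h]
  have : (diagonal d * A * diagonal e).submatrix (γ.orderEmbOfFin rfl) (δ.orderEmbOfFin h) =
      diagonal (d ∘ γ.orderEmbOfFin rfl) * A.submatrix (γ.orderEmbOfFin rfl) (δ.orderEmbOfFin h) *
        diagonal (e ∘ δ.orderEmbOfFin h) := by
    ext i j; simp [mul_diagonal, diagonal_mul]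
  rw [this, det_mul, det_mul, det_diagonal, det_diagonal, Function.comp_def, Function.comp_def,
    prod_orderEmbOfFin, prod_orderEmbOfFin]
  ring

lemma sign_finSumEquivOfFinset_trans_symm {l : ℕ} {γ δ : Finset (Fin n)} (hγ : #γ = k)
    (hδ : #δ = k) (hγc : #γᶜ = l) (hδc : #δᶜ = l) (hn : k + l = n) :
    Equiv.Perm.sign ((finSumEquivOfFinset hδ hδc).trans (finSumEquivOfFinset hγ hγc).symm) =
      (-1) ^ (∑ a ∈ γ, (a : ℕ) + ∑ a ∈ δ, (a : ℕ)) := by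
  rw [← Equiv.Perm.sign_symm_trans_trans _ (finSumFinEquiv.trans (finCongr hn))]
  have : ((finSumFinEquiv.trans (finCongr hn)).symm.trans
      ((finSumEquivOfFinset hδ hδc).trans (finSumEquivOfFinset hγ hγc).symm)).trans
        (finSumFinEquiv.trans (finCongr hn)) =
      frontPerm γ hγ hγc hn * (frontPerm δ hδ hδc hn)⁻¹ := by
    ext x; simp [frontPerm, Equiv.Perm.mul_apply]
  rw [this, Equiv.Perm.sign_mul, Equiv.Perm.sign_inv, sign_frontPerm, sign_frontPerm,
    mul_mul_mul_comm, Int.units_mul_self, mul_one, pow_add]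

/-- Jacobi's complementary minor formula. -/
theorem det_mul_minorOn_inv (hA : IsUnit A.det) {γ δ : Finset (Fin n)} (h : #δ = #γ) :
    A.det * minorOn A⁻¹ γ δ = (-1) ^ (∑ a ∈ γ, (a : ℕ) + ∑ a ∈ δ, (a : ℕ)) * minorOn A δᶜ γᶜ := by
  have hγc : #γᶜ = n - #γ := by rw [card_compl, Fintype.card_fin]
  have hδc : #δᶜ = n - #γ := by rw [card_compl, Fintype.card_fin, h]
  have hn : #γ + (n - #γ) = n :=
    Nat.add_sub_cancel' ((card_le_univ γ).trans_eq (Fintype.card_fin n))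
  set M := A.submatrix (finSumEquivOfFinset h hδc) (finSumEquivOfFinset rfl hγc)
  have hdetM : M.det = (-1) ^ (∑ a ∈ γ, (a : ℕ) + ∑ a ∈ δ, (a : ℕ)) * A.det := by
    rw [det_submatrix_equiv, sign_finSumEquivOfFinset_trans_symm rfl h hγc hδc hn]
    push_cast; rfl
  have hM : IsUnit M.det := by
    rw [hdetM]; exact ((isUnit_neg_one (α := ℝ)).pow _).mul hA
  have h₁₁ : M⁻¹.toBlocks₁₁.det = minorOn A⁻¹ γ δ := by
    rw [inv_submatrix_equiv, minorOn_eq_det _ rfl h]; rfl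
  have h₂₂ : M.toBlocks₂₂.det = minorOn A δᶜ γᶜ := by
    rw [minorOn_eq_det _ hδc hγc]; rfl
  have hjac := det_mul_det_toBlocks₁₁_inv M hM
  rw [hdetM, h₁₁, h₂₂] at hjac
  rw [← hjac, ← mul_assoc, ← mul_assoc, ← pow_add, ← two_mul, pow_mul, neg_one_sq, one_pow,
    one_mul]

end minorOn

def altSignDiag (n : ℕ) : Matrix (Fin n) (Fin n) ℝ :=
  diagonal fun i => (-1) ^ (i : ℕ)

lemma altSignDiag_inv (n : ℕ) : (altSignDiag n)⁻¹ = altSignDiag n := by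
  refine inv_eq_left_inv ?_
  rw [altSignDiag, diagonal_mul_diagonal, ← diagonal_one]
  congr 1
  ext i
  rw [← pow_add, Even.neg_one_pow ⟨i, rfl⟩]

section altSignDiag

variable {n : ℕ} {A : Matrix (Fin n) (Fin n) ℝ}

lemma minorOn_altSignDiag_mul_inv_mul (hA : A.det ≠ 0) {γ δ : Finset (Fin n)}
    (h : #δ = #γ) :
    minorOn (altSignDiag n * A⁻¹ * altSignDiag n) γ δ = minorOn A δᶜ γᶜ / A.det := by
  rw [eq_div_iff hA, altSignDiag, minorOn_diagonal_mul_mul_diagonal _ _ _ h, prod_pow_eq_pow_sum,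
    prod_pow_eq_pow_sum, ← pow_add, mul_comm, ← mul_assoc, mul_right_comm,
    det_mul_minorOn_inv A (isUnit_iff_ne_zero.2 hA) h, mul_right_comm, ← pow_add, ← two_mul,
    pow_mul, neg_one_sq, one_pow, one_mul]

lemma minorOn_altSignDiag_mul_inv_mul_self_pos
    (hA : ∀ α : Finset (Fin n), α.Nonempty → 0 < minorOn A α α) (α : Finset (Fin n)) :
    0 < minorOn (altSignDiag n * A⁻¹ * altSignDiag n) α α := by
  have hdet := det_pos_of_minorOn_self_pos hA
  rw [minorOn_altSignDiag_mul_inv_mul hdet.ne' rfl]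
  exact div_pos (minorOn_self_pos hA _) hdet

lemma minorOn_altSignDiag_mul_inv_mul_erase (hA : A.det ≠ 0) {β : Finset (Fin n)} {r s : Fin n}
    (hr : r ∈ β) (hs : s ∈ β) (hrs : r ≠ s) :
    minorOn (altSignDiag n * A⁻¹ * altSignDiag n) (β.erase r) (β.erase s) =
      minorOn A ((insert r (insert s βᶜ)).erase r) ((insert r (insert s βᶜ)).erase s) / A.det := by
  have hr' : r ∉ insert s βᶜ := by simp [hrs, hr]
  have hs' : s ∉ insert r βᶜ := by simp [hrs.symm, hs]
  rw [minorOn_altSignDiag_mul_inv_mul hA (by rw [card_erase_of_mem hr, card_erase_of_mem hs]),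
    compl_erase, compl_erase, erase_insert hr', insert_comm, erase_insert hs']

end altSignDiag

/-- Let `D = diag(1, −1, 1, …, (−1)^{n−1})`. If `A` is a K-matrix
(hence invertible), then `D A⁻¹ D⁻¹` is a K-matrix; if `A` is an SK-matrix, then
`D A⁻¹ D⁻¹` is an SK-matrix. -/
theorem inverse_conj_K_SK {n : ℕ} (A D : Matrix (Fin n) (Fin n) ℝ)
    (hD : D = Matrix.diagonal (fun i : Fin n => (-1 : ℝ) ^ (i : ℕ))) :
    (IsK A → IsK (D * A⁻¹ * D⁻¹)) ∧ (IsSK A → IsSK (D * A⁻¹ * D⁻¹)) := by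
  obtain rfl : D = altSignDiag n := hD
  rw [altSignDiag_inv]
  constructor
  · rintro ⟨hP, hAP⟩
    have hdet := det_pos_of_minorOn_self_pos hP
    refine ⟨fun α _ => minorOn_altSignDiag_mul_inv_mul_self_pos hP α, fun β r s hrβ hsβ hrs => ?_⟩
    rw [minorOn_altSignDiag_mul_inv_mul_erase hdet.ne' hrβ hsβ hrs]
    exact div_nonneg (hAP _ r s (by simp) (by simp) hrs) hdet.le
  · rintro ⟨hP, hAP⟩
    have hdet := det_pos_of_minorOn_self_pos hP
    refine ⟨fun α _ => minorOn_altSignDiag_mul_inv_mul_self_pos hP α, fun β r s hrβ hsβ hrs => ?_⟩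
    rw [minorOn_altSignDiag_mul_inv_mul_erase hdet.ne' hrβ hsβ hrs]
    exact div_pos (hAP _ r s (by simp) (by simp) hrs) hdet
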